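/- arXiv:1507.07212 — 2 statements merged into one kernel-verified Lean document; each statement's English description precedes it below -/
import Mathlib

section
/- For every bus k and all V_d, V_q ∈ ℝⁿ, with x = (V_d; V_q) ∈ ℝ^{2n} and complex voltage vector V = V_d + i·V_q ∈ ℂⁿ, the complex power injection at bus k satisfies xᵀ·𝐘_k·x + i·(xᵀ·𝐘̄_k·x) = V_k · conj((Y·V)_k). -/
/-!
The power injection `V k * conj ((Y *ᵥ V) k)` is the conjugate of the Hermitian form
`star V ⬝ᵥ Yₖ *ᵥ V`. For a complex matrix `A = R + iI`, the real part of `star V ⬝ᵥ A *ᵥ V` is the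
quadratic form of the real block matrix `[[R, -I], [I, R]]` at `x = (Re V; Im V)`, and its
imaginary part is the real part for `-i • A`. The matrices `𝐘ₖ` and `-𝐘̄ₖ` are the symmetric parts
of the block matrices for `A = Yₖ` and `A = -i • Yₖ`, and symmetrizing does not change a quadratic form.
-/

open Matrix Complex

section
variable {m : Type*}

def realBlock (A : Matrix m m ℂ) : Matrix (m ⊕ m) (m ⊕ m) ℝ :=
  fromBlocks (A.map re) (-A.map im) (A.map im) (A.map re)

lemma realBlock_add_transpose (A : Matrix m m ℂ) :
    realBlock A + (realBlock A)ᵀ = fromBlocks ((A + Aᵀ).map re) ((Aᵀ - A).map im)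
      ((A - Aᵀ).map im) ((A + Aᵀ).map re) := by
  rw [realBlock, fromBlocks_transpose, fromBlocks_add]
  congr 1
  ext
  simp [neg_add_eq_sub]

variable [Fintype m]

lemma dotProduct_half_smul_add_transpose_mulVec (A : Matrix m m ℝ) (x : m → ℝ) :
    x ⬝ᵥ ((1 / 2 : ℝ) • (A + Aᵀ)) *ᵥ x = x ⬝ᵥ A *ᵥ x := by
  rw [smul_mulVec, add_mulVec, dotProduct_smul, dotProduct_add, mulVec_transpose,
    dotProduct_comm x (x ᵥ* A), ← dotProduct_mulVec, smul_eq_mul]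
  ring

lemma sumElim_dotProduct_realBlock_mulVec (A : Matrix m m ℂ) (a b : m → ℝ) :
    Sum.elim a b ⬝ᵥ realBlock A *ᵥ Sum.elim a b
      = (star (fun i => (a i : ℂ) + I * b i) ⬝ᵥ A *ᵥ fun i => (a i : ℂ) + I * b i).re := by
  rw [realBlock, fromBlocks_mulVec, sumElim_dotProduct_sumElim]
  simp only [Sum.elim_comp_inl, Sum.elim_comp_inr, Pi.add_apply, neg_mulVec, Pi.neg_apply,
    dotProduct, mulVec, Finset.mul_sum, re_sum, ← Finset.sum_add_distrib, ← Finset.sum_neg_distrib]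
  refine Finset.sum_congr rfl fun i _ => Finset.sum_congr rfl fun j _ => ?_
  simp
  ring

lemma star_dotProduct_single_mul_mulVec [DecidableEq m] (Y : Matrix m m ℂ) (k : m) (v : m → ℂ) :
    star v ⬝ᵥ (single k k 1 * Y) *ᵥ v = star (v k) * (Y *ᵥ v) k := by
  rw [← mulVec_mulVec, single_mulVec_eq, one_mul, dotProduct_smul, dotProduct_single_one,
    smul_eq_mul, mul_comm, Pi.star_apply]
end

theorem stmt_9_general (n : ℕ) (Y : Matrix (Fin n) (Fin n) ℂ) (k : Fin n)
    (Yk : Matrix (Fin n) (Fin n) ℂ) (hYk : Yk = Matrix.single k k 1 * Y)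
    (Mk : Matrix (Fin n ⊕ Fin n) (Fin n ⊕ Fin n) ℝ)
    (hMk : Mk = (1 / 2 : ℝ) • Matrix.fromBlocks
        ((Yk + Ykᵀ).map Complex.re) ((Ykᵀ - Yk).map Complex.im)
        ((Yk - Ykᵀ).map Complex.im) ((Yk + Ykᵀ).map Complex.re))
    (Mbk : Matrix (Fin n ⊕ Fin n) (Fin n ⊕ Fin n) ℝ)
    (hMbk : Mbk = -((1 / 2 : ℝ) • Matrix.fromBlocks
        ((Yk + Ykᵀ).map Complex.im) ((Yk - Ykᵀ).map Complex.re)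
        ((Ykᵀ - Yk).map Complex.re) ((Yk + Ykᵀ).map Complex.im)))
    (Vd Vq : Fin n → ℝ) (x : Fin n ⊕ Fin n → ℝ) (hx : x = Sum.elim Vd Vq)
    (V : Fin n → ℂ) (hV : V = fun i => (Vd i : ℂ) + Complex.I * (Vq i : ℂ)) :
    ((x ⬝ᵥ Mk.mulVec x : ℝ) : ℂ) + Complex.I * ((x ⬝ᵥ Mbk.mulVec x : ℝ) : ℂ)
      = V k * (starRingEnd ℂ) ((Y.mulVec V) k) := by
  have hMk' : Mk = (1 / 2 : ℝ) • (realBlock Yk + (realBlock Yk)ᵀ) := by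
    rw [realBlock_add_transpose, hMk]
  have hMbk' : Mbk = -((1 / 2 : ℝ) • (realBlock (-I • Yk) + (realBlock (-I • Yk))ᵀ)) := by
    rw [realBlock_add_transpose, hMbk]
    congr 3 <;> ext <;> simp <;> ring
  rw [hMk', hMbk', neg_mulVec, dotProduct_neg, dotProduct_half_smul_add_transpose_mulVec,
    dotProduct_half_smul_add_transpose_mulVec, hx, sumElim_dotProduct_realBlock_mulVec,
    sumElim_dotProduct_realBlock_mulVec, ← hV, smul_mulVec, dotProduct_smul, hYk,
    star_dotProduct_single_mul_mulVec]
  apply Complex.ext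
  · simp
  · simp
    ring

/-- The complex power injection at bus k satisfies
xᵀ·𝐘_k·x + i·(xᵀ·𝐘̄_k·x) = V_k · conj((Y·V)_k). -/
theorem stmt_9 (n : ℕ) (hn : 1 ≤ n) (Y : Matrix (Fin n) (Fin n) ℂ) (k : Fin n)
    (Yk : Matrix (Fin n) (Fin n) ℂ) (hYk : Yk = Matrix.single k k 1 * Y)
    (Mk : Matrix (Fin n ⊕ Fin n) (Fin n ⊕ Fin n) ℝ)
    (hMk : Mk = (1 / 2 : ℝ) • Matrix.fromBlocks
        ((Yk + Ykᵀ).map Complex.re) ((Ykᵀ - Yk).map Complex.im)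
        ((Yk - Ykᵀ).map Complex.im) ((Yk + Ykᵀ).map Complex.re))
    (Mbk : Matrix (Fin n ⊕ Fin n) (Fin n ⊕ Fin n) ℝ)
    (hMbk : Mbk = -((1 / 2 : ℝ) • Matrix.fromBlocks
        ((Yk + Ykᵀ).map Complex.im) ((Yk - Ykᵀ).map Complex.re)
        ((Ykᵀ - Yk).map Complex.re) ((Yk + Ykᵀ).map Complex.im)))
    (Vd Vq : Fin n → ℝ) (x : Fin n ⊕ Fin n → ℝ) (hx : x = Sum.elim Vd Vq)
    (V : Fin n → ℂ) (hV : V = fun i => (Vd i : ℂ) + Complex.I * (Vq i : ℂ)) :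
    ((x ⬝ᵥ Mk.mulVec x : ℝ) : ℂ) + Complex.I * ((x ⬝ᵥ Mbk.mulVec x : ℝ) : ℂ)
      = V k * (starRingEnd ℂ) ((Y.mulVec V) k) :=
  stmt_9_general n Y k Yk hYk Mk hMk Mbk hMbk Vd Vq x hx V hV
end

section
/- For all V_d, V_q ∈ ℝⁿ with x = (V_d; V_q) ∈ ℝ^{2n}, the quadratic form of the line-flow matrix 𝐙_{lm} satisfies xᵀ·𝐙_{lm}·x = (V_{dl}² + V_{ql}²)·g/τ² + (V_{dl}V_{dm} + V_{ql}V_{qm})·(b·sin θ − g·cos θ)/τ + (V_{dl}V_{qm} − V_{ql}V_{dm})·(g·sin θ + b·cos θ)/τ, i.e., tr(𝐙_{lm}·x·xᵀ) equals the active power flow P_{lm} into the line at bus l. -/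
open Matrix

lemma Matrix.dotProduct_single_mulVec {ι R : Type*} [Fintype ι] [DecidableEq ι] [CommSemiring R]
    (x : ι → R) (i j : ι) (c : R) :
    x ⬝ᵥ single i j c *ᵥ x = c * x i * x j := by
  rw [single_mulVec]
  change x ⬝ᵥ Pi.single i (c * x j) = _
  rw [dotProduct_single]
  ring

theorem stmt_16_general (n : ℕ) (l m : Fin n)
    (τ θ g b : ℝ)
    (clm slm : ℝ)
    (hclm : clm = (g * Real.cos θ - b * Real.sin θ) / (2 * τ))
    (hslm : slm = (g * Real.sin θ + b * Real.cos θ) / (2 * τ))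
    (Z : Matrix (Fin n ⊕ Fin n) (Fin n ⊕ Fin n) ℝ)
    (hZ : Z = (g / τ ^ 2) • (Matrix.single (Sum.inl l) (Sum.inl l) (1 : ℝ)
            + Matrix.single (Sum.inr l) (Sum.inr l) 1)
        - clm • (Matrix.single (Sum.inl l) (Sum.inl m) (1 : ℝ)
            + Matrix.single (Sum.inl m) (Sum.inl l) 1
            + Matrix.single (Sum.inr l) (Sum.inr m) 1
            + Matrix.single (Sum.inr m) (Sum.inr l) 1)
        + slm • (Matrix.single (Sum.inl l) (Sum.inr m) (1 : ℝ)
            + Matrix.single (Sum.inr m) (Sum.inl l) 1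
            - Matrix.single (Sum.inr l) (Sum.inl m) 1
            - Matrix.single (Sum.inl m) (Sum.inr l) 1))
    (Vd Vq : Fin n → ℝ) (x : Fin n ⊕ Fin n → ℝ) (hx : x = Sum.elim Vd Vq) :
    x ⬝ᵥ Z.mulVec x
      = (Vd l ^ 2 + Vq l ^ 2) * g / τ ^ 2
        + (Vd l * Vd m + Vq l * Vq m) * (b * Real.sin θ - g * Real.cos θ) / τ
        + (Vd l * Vq m - Vq l * Vd m) * (g * Real.sin θ + b * Real.cos θ) / τ := by
  subst hZ hx hclm hslm
  simp only [sub_mulVec, add_mulVec, smul_mulVec, dotProduct_add, dotProduct_sub,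
    dotProduct_smul, dotProduct_single_mulVec, Sum.elim_inl, Sum.elim_inr, smul_eq_mul]
  ring

/-- The quadratic form of the line-flow matrix 𝐙_{lm} equals the active
power flow P_{lm} into the line at bus l, in rectangular voltage coordinates. -/
theorem stmt_16 (n : ℕ) (hn : 2 ≤ n) (l m : Fin n) (hlm : l ≠ m)
    (τ θ g b bsh : ℝ) (hτ : 0 < τ)
    (clm slm : ℝ)
    (hclm : clm = (g * Real.cos θ - b * Real.sin θ) / (2 * τ))
    (hslm : slm = (g * Real.sin θ + b * Real.cos θ) / (2 * τ))
    (Z : Matrix (Fin n ⊕ Fin n) (Fin n ⊕ Fin n) ℝ)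
    (hZ : Z = (g / τ ^ 2) • (Matrix.single (Sum.inl l) (Sum.inl l) (1 : ℝ)
            + Matrix.single (Sum.inr l) (Sum.inr l) 1)
        - clm • (Matrix.single (Sum.inl l) (Sum.inl m) (1 : ℝ)
            + Matrix.single (Sum.inl m) (Sum.inl l) 1
            + Matrix.single (Sum.inr l) (Sum.inr m) 1
            + Matrix.single (Sum.inr m) (Sum.inr l) 1)
        + slm • (Matrix.single (Sum.inl l) (Sum.inr m) (1 : ℝ)
            + Matrix.single (Sum.inr m) (Sum.inl l) 1
            - Matrix.single (Sum.inr l) (Sum.inl m) 1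
            - Matrix.single (Sum.inl m) (Sum.inr l) 1))
    (Vd Vq : Fin n → ℝ) (x : Fin n ⊕ Fin n → ℝ) (hx : x = Sum.elim Vd Vq) :
    x ⬝ᵥ Z.mulVec x
      = (Vd l ^ 2 + Vq l ^ 2) * g / τ ^ 2
        + (Vd l * Vd m + Vq l * Vq m) * (b * Real.sin θ - g * Real.cos θ) / τ
        + (Vd l * Vq m - Vq l * Vd m) * (g * Real.sin θ + b * Real.cos θ) / τ :=
  stmt_16_general n l m τ θ g b clm slm hclm hslm Z hZ Vd Vq x hx
end
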